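/- For every prime power q, setting n = q², there exist 2-log-sparse sets S₁, ..., Sₙ of positive integers such that the sumset S₁ + ⋯ + Sₙ contains 2^{⌊q²·log₂(q)/4⌋} consecutive integers; in particular it contains an arithmetic progression of length 2^{Ω(n log n)}. -/

import Mathlib

/-- A set of positive integers is `C`-log-sparse if every dyadic interval `[x, 2x)`
contains at most `C` of its elements. -/
def LogSparse (C : ℕ) (T : Set ℕ) : Prop :=
  (∀ t ∈ T, 0 < t) ∧ ∀ x : ℕ, 0 < x → (T ∩ Set.Ico x (2 * x)).ncard ≤ C

/-- The sumset `S 0 + S 1 + ⋯ + S (n-1)`. -/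
def sumSet {n : ℕ} (S : Fin n → Set ℕ) : Set ℕ :=
  {s | ∃ x : Fin n → ℕ, (∀ i, x i ∈ S i) ∧ ∑ i, x i = s}

/-- The arithmetic progression `{a, a+d, …, a+(k-1)d}` of length `k`. -/
def AP (a d k : ℕ) : Set ℕ := {m | ∃ i < k, m = a + i * d}

/-!
Index the `q²` sets by the points of `𝔽_q × 𝔽_q`, and write the target `j` in base `2^m`,
`m = ⌊log₂ q⌋`, with `T ≈ q² log₂ q / (4m)` digits. Block `t` gets a pair `(b_t, c_t)` and each
digit value `d` an element `α_d` of `𝔽_q`; the number encoding digit `d` in block `t` may be carried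
by the sets lying on the curve `v = α_d + b_t u + c_t u²`. Distinct quadratics meet in at most two
points, so by Cauchy–Schwarz any `k ≤ q²/4` of these curves cover at least `k` points, and Hall's
theorem picks distinct sets to carry the `T` digits of `j`. A set carries at most one number per
block, each block at its own binary scale, so it is `2`-log-sparse.
-/

open Finset Function

theorem logSparse_two_of_injOn_log {S : Set ℕ} (hpos : ∀ t ∈ S, 0 < t)
    (hinj : Set.InjOn (Nat.log 2) S) : LogSparse 2 S := by
  refine ⟨hpos, fun x hx => ?_⟩
  calc (S ∩ Set.Ico x (2 * x)).ncard
      ≤ (↑(Icc (Nat.log 2 x) (Nat.log 2 x + 1)) : Set ℕ).ncard :=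
        Set.ncard_le_ncard_of_injOn (Nat.log 2) (fun y hy => ?_)
          (hinj.mono Set.inter_subset_left) (Finset.finite_toSet _)
    _ = 2 := by simp only [Set.ncard_coe_finset, Nat.card_Icc]; omega
  rw [coe_Icc, Set.mem_Icc, ← Nat.log_mul_base one_lt_two hx.ne', mul_comm]
  exact ⟨Nat.log_mono_right hy.2.1, Nat.log_mono_right hy.2.2.le⟩

def HasSparseSumsetRun (n L : ℕ) : Prop :=
  ∃ S : Fin n → Set ℕ, (∀ i, LogSparse 2 (S i)) ∧ ∃ a : ℕ, ∀ j < L, a + j ∈ sumSet S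

theorem HasSparseSumsetRun.mono {n L L' : ℕ} (h : HasSparseSumsetRun n L) (hL : L' ≤ L) :
    HasSparseSumsetRun n L' :=
  let ⟨S, hS, a, ha⟩ := h
  ⟨S, hS, a, fun j hj => ha j (hj.trans_le hL)⟩

def blockValue (m T t c : ℕ) : ℕ := 1 + (2 ^ (m * T + t + 1) + c * (2 ^ m) ^ t)

theorem log_blockValue {m T t c : ℕ} (ht : t < T) (hc : c < 2 ^ m) :
    Nat.log 2 (blockValue m T t c) = m * T + t + 1 := by
  have hdigit : 1 + c * (2 ^ m) ^ t ≤ 2 ^ (m * T) := by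
    calc 1 + c * (2 ^ m) ^ t ≤ (2 ^ m) ^ (t + 1) := by
          rw [pow_succ', Nat.one_add_le_iff]
          exact Nat.mul_lt_mul_of_pos_right hc (by positivity)
      _ ≤ 2 ^ (m * T) := by
          rw [← pow_mul]
          exact Nat.pow_le_pow_right two_pos (Nat.mul_le_mul_left m ht)
  have hW : 2 ^ (m * T) < 2 ^ (m * T + t + 1) := Nat.pow_lt_pow_right one_lt_two (by omega)
  refine Nat.log_eq_of_pow_le_of_lt_pow (by unfold blockValue; omega) ?_
  rw [pow_succ 2 (m * T + t + 1)]
  unfold blockValue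
  omega

section DigitSet

variable {ι : Type*} {m T : ℕ}

/-- Point `i` may carry the filler `1`, or `1 + 2^(mT+t+1) + c·(2^m)^t` whenever `i ∈ N t c`:
the marker `2^(mT+t+1)` puts block `t` alone at its binary scale, and the digits of all blocks
form a base-`2^m` expansion below `2^(mT)`. -/
def digitSet (N : Fin T → Fin (2 ^ m) → Finset ι) (i : ι) : Set ℕ :=
  insert 1 {v | ∃ t c, i ∈ N t c ∧ v = blockValue m T t c}

theorem logSparse_digitSet {N : Fin T → Fin (2 ^ m) → Finset ι}
    (hN : ∀ i t c c', i ∈ N t c → i ∈ N t c' → c = c') (i : ι) :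
    LogSparse 2 (digitSet N i) := by
  refine logSparse_two_of_injOn_log ?_ ?_
  · rintro v (rfl | ⟨t, c, -, rfl⟩)
    · exact one_pos
    · unfold blockValue; positivity
  · have hlog (t : Fin T) (c : Fin (2 ^ m)) : Nat.log 2 (blockValue m T t c) = m * T + t + 1 :=
      log_blockValue t.isLt c.isLt
    rintro v (rfl | ⟨t, c, hc, rfl⟩) w (rfl | ⟨t', c', hc', rfl⟩) hvw
    · rfl
    · simp [hlog] at hvw
    · simp [hlog] at hvw
    · simp only [hlog, add_left_inj, add_right_inj, Fin.val_inj] at hvw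
      subst hvw
      rw [hN i t c c' hc hc']

theorem exists_mem_digitSet_sum_eq [Fintype ι] (N : Fin T → Fin (2 ^ m) → Finset ι)
    (hsdr : ∀ d : Fin T → Fin (2 ^ m), ∃ f : Fin T → ι, Injective f ∧ ∀ t, f t ∈ N t (d t))
    {j : ℕ} (hj : j < 2 ^ (m * T)) :
    ∃ x : ι → ℕ, (∀ i, x i ∈ digitSet N i) ∧
      ∑ i, x i = Fintype.card ι + ∑ t : Fin T, 2 ^ (m * T + t + 1) + j := by
  classical
  set d := finFunctionFinEquiv.symm (⟨j, by rwa [← pow_mul]⟩ : Fin ((2 ^ m) ^ T))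
  have hd : ∑ t, (d t : ℕ) * (2 ^ m) ^ (t : ℕ) = j := by
    rw [← finFunctionFinEquiv_apply, Equiv.apply_symm_apply]
  obtain ⟨f, hf, hfN⟩ := hsdr d
  let y : Fin T → ℕ := fun t => 2 ^ (m * T + t + 1) + d t * (2 ^ m) ^ (t : ℕ)
  refine ⟨fun i => 1 + extend f y 0 i, fun i => ?_, ?_⟩
  · by_cases hi : ∃ t, f t = i
    · obtain ⟨t, rfl⟩ := hi
      exact Or.inr ⟨t, d t, hfN t, by simp only [hf.extend_apply]; rfl⟩
    · exact Or.inl (by simp only [extend_apply' _ _ _ hi, Pi.zero_apply, add_zero])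
  · rw [sum_add_distrib, ← Fintype.sum_of_injective f hf y _ (extend_apply' (f := f) y 0)
      (fun t => (hf.extend_apply _ _ t).symm), sum_add_distrib, hd]
    simp [add_assoc]

end DigitSet

theorem hasSparseSumsetRun_of_sdr {ι : Type*} [Fintype ι] {m T : ℕ}
    (N : Fin T → Fin (2 ^ m) → Finset ι) (hN : ∀ i t c c', i ∈ N t c → i ∈ N t c' → c = c')
    (hsdr : ∀ d : Fin T → Fin (2 ^ m), ∃ f : Fin T → ι, Injective f ∧ ∀ t, f t ∈ N t (d t)) :
    HasSparseSumsetRun (Fintype.card ι) (2 ^ (m * T)) := by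
  let e := Fintype.equivFin ι
  refine ⟨fun i => digitSet N (e.symm i), fun i => logSparse_digitSet hN _,
    Fintype.card ι + ∑ t : Fin T, 2 ^ (m * T + t + 1), fun j hj => ?_⟩
  obtain ⟨x, hx, hsum⟩ := exists_mem_digitSet_sum_eq N hsdr hj
  exact ⟨x ∘ e.symm, fun i => hx _, (e.symm.sum_comp x).trans hsum⟩

section Graph

variable {α β : Type*} [Fintype α] [DecidableEq α] [DecidableEq β]

def graphFinset (f : α → β) : Finset (α × β) := univ.image fun a => (a, f a)

theorem mem_graphFinset {f : α → β} {p : α × β} : p ∈ graphFinset f ↔ f p.1 = p.2 := by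
  simp [graphFinset, Prod.ext_iff, eq_comm]

theorem card_graphFinset (f : α → β) : #(graphFinset f) = Fintype.card α :=
  card_image_of_injective _ fun _ _ h => congrArg Prod.fst h

theorem card_graphFinset_inter (f g : α → β) :
    #(graphFinset f ∩ graphFinset g) = #{a | f a = g a} := by
  have : graphFinset f ∩ graphFinset g = ({a | f a = g a} : Finset α).image fun a => (a, f a) := by
    ext ⟨a, b⟩
    simp only [mem_inter, mem_graphFinset, mem_image, mem_filter, mem_univ, true_and,
      Prod.mk.injEq]
    constructor
    · rintro ⟨rfl, h⟩
      exact ⟨a, h.symm, rfl, rfl⟩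
    · rintro ⟨a, h, rfl, rfl⟩
      exact ⟨rfl, h.symm⟩
  rw [this, card_image_of_injective _ fun _ _ h => congrArg Prod.fst h]

end Graph

open Polynomial in
theorem card_filter_quadratic_eq_le {F : Type*} [Field F] [Fintype F] [DecidableEq F]
    {a b c a' b' c' : F} (h : (a, b, c) ≠ (a', b', c')) :
    #{u | a + b * u + c * u ^ 2 = a' + b' * u + c' * u ^ 2} ≤ 2 := by
  set Z : Finset F := {u | a + b * u + c * u ^ 2 = a' + b' * u + c' * u ^ 2}
  let P : F[X] := C (c - c') * X ^ 2 + C (b - b') * X + C (a - a')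
  by_contra! hZ
  have hP : P = 0 := by
    refine eq_zero_of_natDegree_lt_card_of_eval_eq_zero' P Z (fun u hu => ?_)
      (natDegree_quadratic_le.trans_lt hZ)
    simp only [Z, mem_filter] at hu
    simp only [P, eval_add, eval_mul, eval_C, eval_X, eval_pow]
    linear_combination hu.2
  have hcoeff : ∀ n, P.coeff n = 0 := by simp [hP]
  have h0 := hcoeff 0
  have h1 := hcoeff 1
  have h2 := hcoeff 2
  simp only [P, coeff_add, coeff_C_mul, coeff_X_pow, coeff_X, coeff_C] at h0 h1 h2
  norm_num [sub_eq_zero] at h0 h1 h2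
  exact h (by rw [h0, h1, h2])

section Expansion

variable {ι α : Type*} [DecidableEq α]

theorem sum_card_filter_mem_eq_sum_card (s : Finset ι) {U : Finset α} {A : ι → Finset α}
    (hU : ∀ t ∈ s, A t ⊆ U) : ∑ p ∈ U, #{t ∈ s | p ∈ A t} = ∑ t ∈ s, #(A t) := by
  simp_rw [card_filter]
  rw [sum_comm]
  refine sum_congr rfl fun t ht => ?_
  rw [← card_filter, filter_mem_eq_inter, inter_eq_right.mpr (hU t ht)]

theorem card_le_card_biUnion_of_card_inter_le {s : Finset ι} {A : ι → Finset α} {D l : ℕ}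
    (hD : 0 < D) (hcard : ∀ t ∈ s, #(A t) = D)
    (hinter : ∀ t ∈ s, ∀ t' ∈ s, t ≠ t' → #(A t ∩ A t') ≤ l)
    (hs : l * (#s - 1) + D ≤ D * D) : #s ≤ #(s.biUnion A) := by
  classical
  set U := s.biUnion A
  set k := #s
  have hU : ∀ t ∈ s, A t ⊆ U := fun t ht => subset_biUnion_of_mem A ht
  have hdeg : ∑ p ∈ U, #{t ∈ s | p ∈ A t} = k * D := by
    rw [sum_card_filter_mem_eq_sum_card s hU, sum_congr rfl hcard, sum_const, smul_eq_mul]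
  have hrow : ∀ t ∈ s, ∑ t' ∈ s, #(A t ∩ A t') ≤ l * (k - 1) + D := fun t ht => by
    rw [← add_sum_erase s _ ht, inter_self, hcard t ht, add_comm]
    gcongr
    calc ∑ t' ∈ s.erase t, #(A t ∩ A t') ≤ ∑ _t' ∈ s.erase t, l :=
          sum_le_sum fun t' ht' =>
            hinter t ht t' (mem_of_mem_erase ht') (ne_of_mem_erase ht').symm
      _ = l * (k - 1) := by rw [sum_const, card_erase_of_mem ht, smul_eq_mul, mul_comm]
  have hdeg2 : ∑ p ∈ U, #{t ∈ s | p ∈ A t} ^ 2 ≤ k * (l * (k - 1) + D) := by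
    calc ∑ p ∈ U, #{t ∈ s | p ∈ A t} ^ 2
        = ∑ p ∈ U, #{x ∈ s ×ˢ s | p ∈ A x.1 ∩ A x.2} := by
          refine sum_congr rfl fun p _ => ?_
          simp_rw [mem_inter]
          rw [filter_product (fun t => p ∈ A t) (fun t => p ∈ A t), card_product, sq]
      _ = ∑ x ∈ s ×ˢ s, #(A x.1 ∩ A x.2) :=
          sum_card_filter_mem_eq_sum_card _
            fun x hx => inter_subset_left.trans (hU _ (mem_product.mp hx).1)
      _ = ∑ t ∈ s, ∑ t' ∈ s, #(A t ∩ A t') := sum_product ..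
      _ ≤ ∑ _t ∈ s, (l * (k - 1) + D) := sum_le_sum hrow
      _ = k * (l * (k - 1) + D) := by rw [sum_const, smul_eq_mul]
  rcases k.eq_zero_or_pos with hk | hk
  · exact hk.trans_le (Nat.zero_le _)
  have hCS := sq_sum_le_card_mul_sum_sq (s := U) (f := fun p => #{t ∈ s | p ∈ A t})
  rw [hdeg] at hCS
  refine Nat.le_of_mul_le_mul_right ?_ (by positivity : 0 < k * (D * D))
  calc k * (k * (D * D)) = (k * D) ^ 2 := by ring
    _ ≤ #U * (k * (l * (k - 1) + D)) := hCS.trans (Nat.mul_le_mul_left _ hdeg2)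
    _ ≤ #U * (k * (D * D)) := by gcongr

end Expansion

theorem exists_injective_mem_graphFinset_quadratic {F κ : Type*} [Field F] [Fintype F]
    [DecidableEq F] [Fintype κ] (a : κ → F) (bc : κ → F × F) (hbc : Injective bc)
    (hκ : 2 * (Fintype.card κ - 1) + Fintype.card F ≤ Fintype.card F * Fintype.card F) :
    ∃ f : κ → F × F, Injective f ∧
      ∀ t, f t ∈ graphFinset fun u => a t + (bc t).1 * u + (bc t).2 * u ^ 2 := by
  refine (all_card_le_biUnion_card_iff_exists_injective _).mp fun s => ?_
  refine card_le_card_biUnion_of_card_inter_le (l := 2) Fintype.card_pos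
    (fun t _ => card_graphFinset _) (fun t _ t' _ htt' => ?_) ?_
  · rw [card_graphFinset_inter]
    exact card_filter_quadratic_eq_le fun h => htt' (hbc (by simp_all [Prod.ext_iff]))
  · have := card_le_univ s
    have : 2 * (#s - 1) ≤ 2 * (Fintype.card κ - 1) := by omega
    omega

theorem hasSparseSumsetRun_of_field_card_eq (F : Type*) [Field F] [Fintype F] {q m T : ℕ}
    (hF : Fintype.card F = q) (hm : 2 ^ m ≤ q) (hT : 2 * (T - 1) + q ≤ q * q) :
    HasSparseSumsetRun (q ^ 2) (2 ^ (m * T)) := by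
  classical
  obtain ⟨digit⟩ := Embedding.nonempty_of_card_le (α := Fin (2 ^ m)) (β := F) (by simpa [hF])
  obtain ⟨block⟩ := Embedding.nonempty_of_card_le (α := Fin T) (β := F × F) (by
    have := Nat.le_mul_self q
    have : 0 < q := hF ▸ Fintype.card_pos
    simp only [Fintype.card_fin, Fintype.card_prod, hF]
    omega)
  have h := hasSparseSumsetRun_of_sdr
    (fun t c => graphFinset fun u => digit c + (block t).1 * u + (block t).2 * u ^ 2)
    (fun p t c c' hc hc' => digit.injective <| by
      rw [mem_graphFinset] at hc hc'
      linear_combination hc - hc')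
    (fun d => exists_injective_mem_graphFinset_quadratic (fun t => digit (d t)) block
      block.injective (by simpa [hF] using hT))
  rwa [Fintype.card_prod, hF, ← sq] at h

theorem four_mul_floor_sq_mul_logb_le (q : ℕ) :
    4 * ⌊(q : ℝ) ^ 2 * Real.logb 2 q / 4⌋₊ ≤ q ^ 2 * (Nat.log 2 q + 1) := by
  have hlog : Real.logb 2 q < Nat.log 2 q + 1 := by
    have h := Nat.lt_floor_add_one (Real.logb 2 q)
    rwa [show ⌊Real.logb 2 (q : ℝ)⌋₊ = Nat.log 2 q by
      exact_mod_cast Real.natFloor_logb_natCast 2 q] at h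
  have hnonneg : 0 ≤ Real.logb 2 q := by
    simpa using (Nat.cast_nonneg _).trans (Real.natLog_le_logb q 2)
  have hfloor := Nat.floor_le (a := (q : ℝ) ^ 2 * Real.logb 2 q / 4) (by positivity)
  have : (4 * ⌊(q : ℝ) ^ 2 * Real.logb 2 q / 4⌋₊ : ℝ) ≤ q ^ 2 * (Nat.log 2 q + 1) := by
    nlinarith [sq_nonneg (q : ℝ)]
  exact_mod_cast this

/-- `T = ⌈M / m⌉`; for `m = 1`, i.e. `q ∈ {2, 3}`, the bound only holds by integrality. -/
theorem exists_le_log_mul_of_four_mul_le {q M : ℕ} (hq : 2 ≤ q)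
    (hM : 4 * M ≤ q ^ 2 * (Nat.log 2 q + 1)) :
    ∃ T, M ≤ Nat.log 2 q * T ∧ 2 * (T - 1) + q ≤ q * q := by
  have hm1 : 1 ≤ Nat.log 2 q := Nat.le_log_of_pow_le one_lt_two (by simpa using hq)
  have hqm : 2 ^ Nat.log 2 q ≤ q := Nat.pow_log_le_self 2 (by omega)
  have hqm' : q < 2 ^ (Nat.log 2 q + 1) := Nat.lt_pow_succ_log_self one_lt_two q
  generalize Nat.log 2 q = m at *
  have hdiv := Nat.div_add_mod (M + m - 1) m
  have hmod := Nat.mod_lt (M + m - 1) (by omega : 0 < m)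
  generalize (M + m - 1) / m = T at *
  refine ⟨T, by omega, ?_⟩
  obtain rfl | ⟨U, rfl⟩ : T = 0 ∨ ∃ U, T = U + 1 := by cases T <;> simp
  · simpa using Nat.le_mul_self q
  have hU : m * U + 1 ≤ M := by rw [mul_add_one] at hdiv; omega
  simp only [add_tsub_cancel_right]
  obtain ⟨k, rfl⟩ : ∃ k, m = k + 1 := ⟨m - 1, by omega⟩
  rcases k with _ | k
  · have : q < 4 := by simpa using hqm'
    interval_cases q <;> omega
  · have hq4 : 4 ≤ q :=
      le_trans (by simpa using Nat.pow_le_pow_right two_pos (by omega : 2 ≤ k + 2)) hqm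
    nlinarith [Nat.mul_le_mul_right (q * (k + 1)) hq4]

theorem explicit_construction (q : ℕ) (hq : ∃ p k : ℕ, p.Prime ∧ 1 ≤ k ∧ q = p ^ k) :
    ∃ S : Fin (q ^ 2) → Set ℕ, (∀ i, LogSparse 2 (S i)) ∧
      ∃ a : ℕ, ∀ j : ℕ,
        j < 2 ^ (⌊(q : ℝ) ^ 2 * Real.logb 2 (q : ℝ) / 4⌋₊) →
          a + j ∈ sumSet S := by
  obtain ⟨p, k, hp, hk, rfl⟩ := hq
  have : Fact p.Prime := ⟨hp⟩
  let : Fintype (GaloisField p k) := Fintype.ofFinite _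
  have hF : Fintype.card (GaloisField p k) = p ^ k := by
    rw [Fintype.card_eq_nat_card]
    exact GaloisField.card p k (by omega)
  have hq : 2 ≤ p ^ k := hp.two_le.trans (Nat.le_self_pow (by omega) p)
  obtain ⟨T, hMT, hT⟩ :=
    exists_le_log_mul_of_four_mul_le hq (four_mul_floor_sq_mul_logb_le (p ^ k))
  exact (hasSparseSumsetRun_of_field_card_eq _ hF (Nat.pow_log_le_self 2 (by omega)) hT).mono
    (Nat.pow_le_pow_right two_pos hMT)
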